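/- Let R be an irreducible simply-laced root system with positive roots R⁺ and half-sum of positive roots ρ. If β ∈ R is a root such that β + ρ is non-singular (i.e., ⟨β + ρ, α∨⟩ ≠ 0 for every α ∈ R⁺), then either β is the highest root α₀ or β is the negative of a simple root. -/

import Mathlib

/-!
STATEMENT 0. Let `R` be an irreducible simply-laced root system (in a real inner
product space) with positive roots `R⁺` (cut out by a linear functional `f` not
vanishing on any root) and half-sum of positive roots `ρ`.  If `β ∈ R` is such that
`β + ρ` is non-singular (i.e. `⟨β + ρ, α∨⟩ ≠ 0` for every positive root `α`), then
either `β` is the highest root or `β` is the negative of a simple root.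
-/

open scoped RealInnerProductSpace Classical

variable {V : Type*} [NormedAddCommGroup V] [InnerProductSpace ℝ V]

/-- The Cartan pairing `⟨β, α∨⟩ = 2(β,α)/(α,α)`. -/
noncomputable def pairCo (β a : V) : ℝ := 2 * ⟪β, a⟫ / ⟪a, a⟫

/-- A (reduced, crystallographic) root system, as a finite subset of a real inner
product space. -/
structure IsRootSystem (R : Finset V) : Prop where
  nonempty : R.Nonempty
  zero_not_mem : (0 : V) ∉ R
  crystallographic : ∀ a ∈ R, ∀ b ∈ R, ∃ n : ℤ, pairCo b a = (n : ℝ)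
  reflect_mem : ∀ a ∈ R, ∀ b ∈ R, b - pairCo b a • a ∈ R
  reduced : ∀ a ∈ R, ∀ t : ℝ, t • a ∈ R → t = 1 ∨ t = -1

/-- Irreducibility: `R` admits no splitting into two nonempty mutually orthogonal
parts. -/
def IsIrreducibleRS (R : Finset V) : Prop :=
  ∀ R₁ R₂ : Finset V, R = R₁ ∪ R₂ → Disjoint R₁ R₂ →
    (∀ a ∈ R₁, ∀ b ∈ R₂, ⟪a, b⟫ = 0) → R₁ = ∅ ∨ R₂ = ∅

/-- Simply-laced: all roots have the same length. -/
def IsSimplyLaced (R : Finset V) : Prop := ∀ a ∈ R, ∀ b ∈ R, ‖a‖ = ‖b‖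

/-- The positive roots determined by a linear functional `f` nonvanishing on `R`. -/
noncomputable def posRoots (R : Finset V) (f : V →ₗ[ℝ] ℝ) : Finset V :=
  R.filter fun a => 0 < f a

/-- Simple roots: positive roots which are not sums of two positive roots. -/
def IsSimpleRoot (R : Finset V) (f : V →ₗ[ℝ] ℝ) (a : V) : Prop :=
  a ∈ posRoots R f ∧ ¬ ∃ b ∈ posRoots R f, ∃ c ∈ posRoots R f, a = b + c

/-- The highest root: the (unique, for irreducible `R`) maximal root. -/
def IsHighestRoot (R : Finset V) (f : V →ₗ[ℝ] ℝ) (θ : V) : Prop :=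
  θ ∈ posRoots R f ∧ ∀ a ∈ posRoots R f, θ + a ∉ (R : Set V)

/-- `ρ`, the half-sum of the positive roots. -/
noncomputable def halfSumPos (R : Finset V) (f : V →ₗ[ℝ] ℝ) : V :=
  (2 : ℝ)⁻¹ • ∑ a ∈ posRoots R f, a


/-!
For a simple root `α` the reflection `s_α` permutes the positive roots other than `α`, so
`⟨ρ, α∨⟩ = 1`. In the simply-laced case `β + α` is a root exactly when `⟨β, α∨⟩ = -1`, so
non-singularity of `β + ρ` says that `β + α` is not a root for any simple `α`. If `β` is
negative, pick a simple `α` with `(-β, α) > 0`: unless `-β = α`, `-β - α` is a root,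
hence so is `β + α`. If `β` is positive and `β + γ` is a root for some positive `γ`, take
such `γ` with `f γ` least and a simple `α` with `(γ, α) > 0`; then `γ - α` is positive and
`⟨β + γ, α∨⟩ > 0`, so `β + (γ - α)` is a root, contradicting minimality.
-/

open Finset

lemma pairCo_add (x y a : V) : pairCo (x + y) a = pairCo x a + pairCo y a := by
  simp only [pairCo, inner_add_left]; ring

lemma pairCo_neg (x a : V) : pairCo (-x) a = -pairCo x a := by
  simp only [pairCo, inner_neg_left]; ring

lemma pairCo_smul (t : ℝ) (x a : V) : pairCo (t • x) a = t * pairCo x a := by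
  simp only [pairCo, real_inner_smul_left]; ring

lemma pairCo_sub (x y a : V) : pairCo (x - y) a = pairCo x a - pairCo y a := by
  simp only [pairCo, inner_sub_left]; ring

lemma pairCo_sum {ι : Type*} (s : Finset ι) (g : ι → V) (a : V) :
    pairCo (∑ i ∈ s, g i) a = ∑ i ∈ s, pairCo (g i) a := by
  simp only [pairCo, sum_inner, Finset.sum_div, Finset.mul_sum]

lemma pairCo_self {a : V} (ha : a ≠ 0) : pairCo a a = 2 := by
  rw [pairCo, mul_div_assoc, div_self (inner_self_ne_zero.2 ha), mul_one]

lemma pairCo_pos_of_inner_pos {a b : V} (h : 0 < ⟪b, a⟫) : 0 < pairCo b a := by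
  have ha : a ≠ 0 := by rintro rfl; simp at h
  exact div_pos (by linarith) (real_inner_self_pos.2 ha)

lemma pairCo_eq_neg_one_of_norm_add_eq {a b : V} (ha : a ≠ 0) (hab : ‖a‖ = ‖b‖)
    (hsum : ‖a + b‖ = ‖a‖) : pairCo b a = -1 := by
  have h : 2 * ⟪b, a⟫ = -⟪a, a⟫ := by
    have := norm_add_sq_real a b
    rw [hsum, ← hab, real_inner_comm] at this
    rw [real_inner_self_eq_norm_sq]
    linarith
  rw [pairCo, h, neg_div, div_self (inner_self_ne_zero.2 ha)]

noncomputable def rootReflection (a x : V) : V := x - pairCo x a • a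

lemma pairCo_rootReflection {a : V} (ha : a ≠ 0) (x : V) :
    pairCo (rootReflection a x) a = -pairCo x a := by
  rw [rootReflection, pairCo_sub, pairCo_smul, pairCo_self ha]; ring

lemma rootReflection_rootReflection {a : V} (ha : a ≠ 0) (x : V) :
    rootReflection a (rootReflection a x) = x := by
  rw [rootReflection, pairCo_rootReflection ha, rootReflection]; module

lemma rootReflection_self {a : V} (ha : a ≠ 0) : rootReflection a a = -a := by
  rw [rootReflection, pairCo_self ha]; module

section PositiveRoots

variable {R : Finset V} {f : V →ₗ[ℝ] ℝ}

lemma mem_posRoots {a : V} : a ∈ posRoots R f ↔ a ∈ R ∧ 0 < f a := mem_filter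

lemma mem_closure_isSimpleRoot {β : V} (hβ : β ∈ posRoots R f) :
    β ∈ AddSubmonoid.closure {α | IsSimpleRoot R f α} := by
  set M := AddSubmonoid.closure {α | IsSimpleRoot R f α}
  by_contra hβM
  obtain ⟨γ, hγ, hmin⟩ :=
    ((posRoots R f).filter (· ∉ M)).exists_min_image f ⟨β, mem_filter.2 ⟨hβ, hβM⟩⟩
  obtain ⟨hγP, hγM⟩ := mem_filter.1 hγ
  have hlower : ∀ x ∈ posRoots R f, f x < f γ → x ∈ M := fun x hx hlt =>
    by_contra fun hxM => (hmin x (mem_filter.2 ⟨hx, hxM⟩)).not_gt hlt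
  obtain ⟨b, hb, c, hc, rfl⟩ : ∃ b ∈ posRoots R f, ∃ c ∈ posRoots R f, γ = b + c := by
    by_contra hsplit
    exact hγM (AddSubmonoid.subset_closure ⟨hγP, hsplit⟩)
  have hfb := (mem_posRoots.1 hb).2
  have hfc := (mem_posRoots.1 hc).2
  exact hγM (add_mem (hlower b hb (by rw [map_add]; linarith))
    (hlower c hc (by rw [map_add]; linarith)))

lemma exists_isSimpleRoot_inner_pos {β : V} (hβ : β ∈ posRoots R f) :
    ∃ α, IsSimpleRoot R f α ∧ 0 < ⟪β, α⟫ := by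
  by_contra! h
  have hle : ∀ x ∈ AddSubmonoid.closure {α | IsSimpleRoot R f α}, ⟪β, x⟫ ≤ 0 :=
    fun x hx => AddSubmonoid.closure_induction (fun α hα => h α hα) (by simp)
      (fun x y _ _ hx hy => by rw [inner_add_right]; linarith) hx
  have hβ0 : β ≠ 0 := by rintro rfl; simp [mem_posRoots] at hβ
  exact (real_inner_self_pos.2 hβ0).not_ge (hle β (mem_closure_isSimpleRoot hβ))

end PositiveRoots

namespace IsRootSystem

variable {R : Finset V} {f : V →ₗ[ℝ] ℝ}

lemma ne_zero (hR : IsRootSystem R) {a : V} (ha : a ∈ R) : a ≠ 0 := by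
  rintro rfl; exact hR.zero_not_mem ha

lemma neg_mem (hR : IsRootSystem R) {a : V} (ha : a ∈ R) : -a ∈ R := by
  rw [← rootReflection_self (hR.ne_zero ha)]
  exact hR.reflect_mem a ha a ha

/-- Since `‖b - a‖² = (2 - ⟨b, a∨⟩)‖a‖²` for roots of equal length, the integer `⟨b, a∨⟩`
is at most `1` unless `b = a`. -/
lemma pairCo_eq_one_and_sub_mem (hR : IsRootSystem R) {a b : V} (ha : a ∈ R) (hb : b ∈ R)
    (hab : ‖a‖ = ‖b‖) (hne : b ≠ a) (h : 0 < pairCo b a) :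
    pairCo b a = 1 ∧ b - a ∈ R := by
  obtain ⟨n, hn⟩ := hR.crystallographic a ha b hb
  have haa : 0 < ⟪a, a⟫ := real_inner_self_pos.2 (hR.ne_zero ha)
  have hdist : ‖b - a‖ ^ 2 = (2 - pairCo b a) * ⟪a, a⟫ := by
    rw [norm_sub_sq_real, ← hab, ← real_inner_self_eq_norm_sq, pairCo]
    field_simp
    ring
  have hlt : pairCo b a < 2 := by
    have : 0 < ‖b - a‖ := norm_pos_iff.2 (sub_ne_zero.2 hne)
    nlinarith
  have hn1 : n = 1 := by
    rw [hn] at h hlt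
    have : (0 : ℤ) < n := by exact_mod_cast h
    have : n < 2 := by exact_mod_cast hlt
    omega
  have hp : pairCo b a = 1 := by rw [hn, hn1, Int.cast_one]
  exact ⟨hp, by simpa [hp] using hR.reflect_mem a ha b hb⟩

lemma add_mem_of_pairCo_neg (hR : IsRootSystem R) {a b : V} (ha : a ∈ R) (hb : b ∈ R)
    (hab : ‖a‖ = ‖b‖) (hne : b ≠ -a) (h : pairCo b a < 0) : a + b ∈ R := by
  have hsub := (hR.pairCo_eq_one_and_sub_mem ha (hR.neg_mem hb) (by rwa [norm_neg])
    (fun h' => hne (by rw [← h', neg_neg])) (by rw [pairCo_neg]; linarith)).2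
  simpa only [neg_sub, sub_neg_eq_add] using hR.neg_mem hsub

lemma mem_posRoots_or_neg_mem_posRoots (hR : IsRootSystem R) (hf : ∀ a ∈ R, f a ≠ 0)
    {a : V} (ha : a ∈ R) : a ∈ posRoots R f ∨ -a ∈ posRoots R f := by
  rcases (hf a ha).lt_or_gt with h | h
  · exact Or.inr (mem_posRoots.2 ⟨hR.neg_mem ha, by rw [map_neg]; linarith⟩)
  · exact Or.inl (mem_posRoots.2 ⟨ha, h⟩)

lemma sub_mem_posRoots_of_isSimpleRoot (hR : IsRootSystem R) (hsl : IsSimplyLaced R)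
    (hf : ∀ a ∈ R, f a ≠ 0) {α γ : V} (hα : IsSimpleRoot R f α) (hγ : γ ∈ posRoots R f)
    (hne : γ ≠ α) (h : 0 < pairCo γ α) : pairCo γ α = 1 ∧ γ - α ∈ posRoots R f := by
  have hαR := (mem_posRoots.1 hα.1).1
  have hγR := (mem_posRoots.1 hγ).1
  obtain ⟨hp, hsub⟩ := hR.pairCo_eq_one_and_sub_mem hαR hγR (hsl α hαR γ hγR) hne h
  refine ⟨hp, (hR.mem_posRoots_or_neg_mem_posRoots hf hsub).resolve_right fun hneg => ?_⟩
  rw [neg_sub] at hneg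
  exact hα.2 ⟨γ, hγ, α - γ, hneg, by abel⟩

lemma rootReflection_mem_posRoots_erase (hR : IsRootSystem R) (hsl : IsSimplyLaced R)
    (hf : ∀ a ∈ R, f a ≠ 0) {α γ : V} (hα : IsSimpleRoot R f α)
    (hγ : γ ∈ (posRoots R f).erase α) : rootReflection α γ ∈ (posRoots R f).erase α := by
  obtain ⟨hγα, hγP⟩ := mem_erase.1 hγ
  obtain ⟨hγR, hfγ⟩ := mem_posRoots.1 hγP
  obtain ⟨hαR, hfα⟩ := mem_posRoots.1 hα.1
  have hα0 := hR.ne_zero hαR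
  have hP : rootReflection α γ ∈ posRoots R f := by
    rcases le_or_gt (pairCo γ α) 0 with hle | hpos
    · refine mem_posRoots.2 ⟨hR.reflect_mem α hαR γ hγR, ?_⟩
      simp only [rootReflection, map_sub, map_smul, smul_eq_mul]
      nlinarith
    · obtain ⟨hp, hsub⟩ := hR.sub_mem_posRoots_of_isSimpleRoot hsl hf hα hγP hγα hpos
      simpa [rootReflection, hp] using hsub
  refine mem_erase.2 ⟨fun hσ => ?_, hP⟩
  have : γ = -α := by
    rw [← rootReflection_rootReflection hα0 γ, hσ, rootReflection_self hα0]
  rw [this, map_neg] at hfγ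
  linarith

lemma pairCo_halfSumPos_of_isSimpleRoot (hR : IsRootSystem R) (hsl : IsSimplyLaced R)
    (hf : ∀ a ∈ R, f a ≠ 0) {α : V} (hα : IsSimpleRoot R f α) :
    pairCo (halfSumPos R f) α = 1 := by
  have hα0 := hR.ne_zero (mem_posRoots.1 hα.1).1
  have hσ := fun γ => hR.rootReflection_mem_posRoots_erase hsl hf hα (γ := γ)
  have hrest : ∑ γ ∈ (posRoots R f).erase α, pairCo γ α = 0 := by
    have h := sum_nbij' (rootReflection α) (rootReflection α) hσ hσ
      (fun γ _ => rootReflection_rootReflection hα0 γ)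
      (fun γ _ => rootReflection_rootReflection hα0 γ)
      (fun γ _ => rfl) (f := fun γ => pairCo (rootReflection α γ) α) (g := (pairCo · α))
    simp only [pairCo_rootReflection hα0, sum_neg_distrib] at h
    linarith
  rw [halfSumPos, pairCo_smul, pairCo_sum, ← insert_erase hα.1,
    sum_insert (notMem_erase α _), pairCo_self hα0, hrest]
  norm_num

lemma isHighestRoot_of_forall_add_notMem (hR : IsRootSystem R) (hsl : IsSimplyLaced R)
    (hf : ∀ a ∈ R, f a ≠ 0) {β : V} (hβ : β ∈ posRoots R f)
    (hadd : ∀ α, IsSimpleRoot R f α → β + α ∉ R) : IsHighestRoot R f β := by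
  obtain ⟨hβR, hfβ⟩ := mem_posRoots.1 hβ
  refine ⟨hβ, fun γ₀ hγ₀ hβγ₀ => ?_⟩
  obtain ⟨γ, hγ, hmin⟩ := ((posRoots R f).filter (β + · ∈ R)).exists_min_image f
    ⟨γ₀, mem_filter.2 ⟨hγ₀, hβγ₀⟩⟩
  obtain ⟨hγP, hβγ⟩ := mem_filter.1 hγ
  obtain ⟨α, hα, hinner⟩ := exists_isSimpleRoot_inner_pos hγP
  obtain ⟨hαR, hfα⟩ := mem_posRoots.1 hα.1
  have hγα : γ ≠ α := by rintro rfl; exact hadd γ hα hβγ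
  obtain ⟨hγα1, hγαP⟩ := hR.sub_mem_posRoots_of_isSimpleRoot hsl hf hα hγP hγα
    (pairCo_pos_of_inner_pos hinner)
  have hβα : 0 ≤ pairCo β α := by
    by_contra! hneg
    have hne : β ≠ -α := by rintro rfl; rw [map_neg] at hfβ; linarith
    exact hadd α hα (add_comm α β ▸ hR.add_mem_of_pairCo_neg hαR hβR (hsl α hαR β hβR) hne hneg)
  have hne : β + γ ≠ α := fun h => hα.2 ⟨β, hβ, γ, hγP, h.symm⟩
  obtain ⟨-, hdesc⟩ := hR.pairCo_eq_one_and_sub_mem hαR hβγ (hsl α hαR _ hβγ) hne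
    (by rw [pairCo_add]; linarith)
  have := hmin (γ - α) (mem_filter.2 ⟨hγαP, by rwa [← add_sub_assoc]⟩)
  rw [map_sub] at this
  linarith

lemma exists_eq_neg_of_forall_add_notMem (hR : IsRootSystem R) (hsl : IsSimplyLaced R)
    {β : V} (hβ : -β ∈ posRoots R f) (hadd : ∀ α, IsSimpleRoot R f α → β + α ∉ R) :
    ∃ α, IsSimpleRoot R f α ∧ β = -α := by
  obtain ⟨α, hα, hinner⟩ := exists_isSimpleRoot_inner_pos hβ
  refine ⟨α, hα, by_contra fun hne => ?_⟩
  have hαR := (mem_posRoots.1 hα.1).1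
  have hβR := (mem_posRoots.1 hβ).1
  obtain ⟨-, hsub⟩ := hR.pairCo_eq_one_and_sub_mem hαR hβR (hsl α hαR _ hβR)
    (fun h => hne (by rw [← h, neg_neg])) (pairCo_pos_of_inner_pos hinner)
  exact hadd α hα (by simpa only [neg_sub, sub_neg_eq_add, add_comm] using hR.neg_mem hsub)

end IsRootSystem

theorem simply_laced_nonsingular_root_plus_rho_general
    (R : Finset V) (hR : IsRootSystem R)
    (hsl : IsSimplyLaced R)
    (f : V →ₗ[ℝ] ℝ) (hf : ∀ a ∈ R, f a ≠ 0)
    (β : V) (hβ : β ∈ R)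
    (hns : ∀ a ∈ posRoots R f, pairCo (β + halfSumPos R f) a ≠ 0) :
    IsHighestRoot R f β ∨ ∃ a, IsSimpleRoot R f a ∧ β = -a := by
  have hadd : ∀ α, IsSimpleRoot R f α → β + α ∉ R := by
    intro α hα hmem
    have hαR := (mem_posRoots.1 hα.1).1
    have hβα : pairCo β α = -1 := pairCo_eq_neg_one_of_norm_add_eq (hR.ne_zero hαR)
      (hsl α hαR β hβ) (hsl _ (add_comm β α ▸ hmem) α hαR)
    apply hns α hα.1
    rw [pairCo_add, hβα, hR.pairCo_halfSumPos_of_isSimpleRoot hsl hf hα]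
    norm_num
  rcases hR.mem_posRoots_or_neg_mem_posRoots hf hβ with hpos | hneg
  · exact Or.inl (hR.isHighestRoot_of_forall_add_notMem hsl hf hpos hadd)
  · exact Or.inr (hR.exists_eq_neg_of_forall_add_notMem hsl hneg hadd)

theorem simply_laced_nonsingular_root_plus_rho
    (R : Finset V) (hR : IsRootSystem R) (hirr : IsIrreducibleRS R)
    (hsl : IsSimplyLaced R)
    (f : V →ₗ[ℝ] ℝ) (hf : ∀ a ∈ R, f a ≠ 0)
    (β : V) (hβ : β ∈ R)
    (hns : ∀ a ∈ posRoots R f, pairCo (β + halfSumPos R f) a ≠ 0) :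
    IsHighestRoot R f β ∨ ∃ a, IsSimpleRoot R f a ∧ β = -a :=
  simply_laced_nonsingular_root_plus_rho_general R hR hsl f hf β hβ hns
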